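/- Let E be a finite-dimensional vector space over a field K equipped with a nondegenerate alternating bilinear form ω, and let L₀ and L₁ be lagrangian subspaces of E that are complementary (L₀ ∩ L₁ = 0 and L₀ + L₁ = E). Then the map sending a linear map f : L₁ → L₀ with ω(f x, y) = ω(f y, x) for all x, y ∈ L₁ to its graph Γ_f = {x + f x : x ∈ L₁} is a bijection from {f : L₁ → L₀ linear : (x,y) ↦ ω(f x, y) is symmetric} onto the set of lagrangian subspaces L of E satisfying L ∩ L₀ = 0. -/

import Mathlib

/-- The `ω`-orthogonal complement of a subspace `L`:
`L^⊥ = {x ∈ E : ω x y = 0 for all y ∈ L}`. -/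
def sympOrtho {K E : Type*} [Field K] [AddCommGroup E] [Module K E]
    (ω : LinearMap.BilinForm K E) (L : Submodule K E) : Submodule K E where
  carrier := {x | ∀ y ∈ L, ω x y = 0}
  add_mem' := by
    intro a b ha hb y hy
    simp [map_add, ha y hy, hb y hy]
  zero_mem' := by
    intro y hy
    simp
  smul_mem' := by
    intro c a ha y hy
    simp [map_smul, ha y hy]

lemma mem_sympOrtho_iff {K E : Type*} [Field K] [AddCommGroup E] [Module K E]
    (ω : LinearMap.BilinForm K E) (L : Submodule K E) (x : E) :
    x ∈ sympOrtho ω L ↔ ∀ y ∈ L, ω x y = 0 := Iff.rfl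

lemma sympOrtho_eq_orthogonal {K E : Type*} [Field K] [AddCommGroup E] [Module K E]
    (ω : LinearMap.BilinForm K E) (hrefl : ω.IsRefl) (L : Submodule K E) :
    sympOrtho ω L = ω.orthogonal L := by
  ext x
  constructor
  · intro h y hy
    exact hrefl x y (h y hy)
  · intro h y hy
    exact hrefl y x (h y hy)

lemma lagrangian_finrank {K E : Type*} [Field K] [AddCommGroup E] [Module K E]
    [FiniteDimensional K E] (ω : LinearMap.BilinForm K E) (hnd : ω.Nondegenerate)
    (hrefl : ω.IsRefl) (L : Submodule K E) (hL : L = sympOrtho ω L) :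
    Module.finrank K L + Module.finrank K L = Module.finrank K E := by
  have h1 : Module.finrank K (ω.orthogonal L) = Module.finrank K E - Module.finrank K L :=
    LinearMap.BilinForm.finrank_orthogonal hnd L
  rw [sympOrtho_eq_orthogonal ω hrefl] at hL
  rw [← hL] at h1
  have h2 : Module.finrank K L ≤ Module.finrank K E := Submodule.finrank_le L
  omega

/-- Let `L₀, L₁` be complementary lagrangian subspaces of a finite-dimensional
symplectic vector space.  The map `f ↦ Γ_f = {x + f x : x ∈ L₁}` is a bijection
from the symmetric linear maps `L₁ → L₀` onto the lagrangian subspaces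
transverse to `L₀`. -/
theorem graph_bijection_onto_transverse_lagrangians
    {K E : Type*} [Field K] [AddCommGroup E] [Module K E] [FiniteDimensional K E]
    (ω : LinearMap.BilinForm K E) (halt : ω.IsAlt) (hnd : ω.Nondegenerate)
    (L₀ L₁ : Submodule K E) (hL₀ : L₀ = sympOrtho ω L₀) (hL₁ : L₁ = sympOrtho ω L₁)
    (hmeet : L₀ ⊓ L₁ = ⊥) (hjoin : L₀ ⊔ L₁ = ⊤) :
    Set.BijOn (fun f : L₁ →ₗ[K] L₀ => LinearMap.range (L₁.subtype + L₀.subtype ∘ₗ f))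
      {f : L₁ →ₗ[K] L₀ | ∀ x y : L₁, ω (f x) y = ω (f y) x}
      {L : Submodule K E | L = sympOrtho ω L ∧ L ⊓ L₀ = ⊥} := by
  have hrefl : ω.IsRefl := halt.isRefl
  -- membership in sympOrtho applied pairwise
  have mem₁ : ∀ v w : L₁, ω v w = 0 := by
    intro v w
    exact (le_of_eq hL₁) v.2 w w.2
  have mem₀ : ∀ v w : L₀, ω v w = 0 := by
    intro v w
    exact (le_of_eq hL₀) v.2 w w.2
  -- value of the graph map
  have gval : ∀ (f : L₁ →ₗ[K] L₀) (v : L₁),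
      (L₁.subtype + L₀.subtype ∘ₗ f) v = (v : E) + (f v : E) := by
    intro f v; rfl
  -- injectivity of the graph map, hence finrank of graphs
  have ginj : ∀ f : L₁ →ₗ[K] L₀, Function.Injective (L₁.subtype + L₀.subtype ∘ₗ f) := by
    intro f
    rw [← LinearMap.ker_eq_bot, eq_bot_iff]
    intro v hv
    rw [LinearMap.mem_ker, gval] at hv
    have hmem : (v : E) ∈ L₀ ⊓ L₁ := by
      constructor
      · have : (v : E) = -(f v : E) := by linear_combination (norm := module) hv
        rw [this]
        exact neg_mem (f v).2
      · exact v.2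
    rw [hmeet] at hmem
    exact Subtype.ext hmem
  have gfin : ∀ f : L₁ →ₗ[K] L₀,
      Module.finrank K (LinearMap.range (L₁.subtype + L₀.subtype ∘ₗ f)) =
        Module.finrank K L₁ := fun f => LinearMap.finrank_range_of_inj (ginj f)
  -- dimensions
  have hdim₀ : Module.finrank K L₀ + Module.finrank K L₀ = Module.finrank K E :=
    lagrangian_finrank ω hnd hrefl L₀ hL₀
  have hdim₁ : Module.finrank K L₁ + Module.finrank K L₁ = Module.finrank K E :=
    lagrangian_finrank ω hnd hrefl L₁ hL₁
  have hdim01 : Module.finrank K L₀ = Module.finrank K L₁ := by omega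
  constructor
  · -- MapsTo
    intro f hf
    set Γ := LinearMap.range (L₁.subtype + L₀.subtype ∘ₗ f) with hΓ
    have hgraph_le : Γ ≤ sympOrtho ω Γ := by
      rintro x ⟨v, rfl⟩
      rintro y ⟨w, rfl⟩
      rw [gval, gval]
      have h1 : ω (v : E) (f w : E) = - ω (f w : E) (v : E) := by
        rw [halt.neg_eq]
      simp only [map_add, LinearMap.add_apply]
      rw [mem₁ v w, mem₀ (f v) (f w), h1, hf w v]
      ring
    have hΓortho : Module.finrank K (sympOrtho ω Γ) = Module.finrank K L₁ := by
      rw [sympOrtho_eq_orthogonal ω hrefl,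
        LinearMap.BilinForm.finrank_orthogonal hnd, gfin f]
      omega
    have hΓeq : Γ = sympOrtho ω Γ := by
      apply Submodule.eq_of_le_of_finrank_le hgraph_le
      rw [hΓortho, gfin f]
    refine ⟨hΓeq, ?_⟩
    rw [eq_bot_iff]
    rintro x ⟨hxΓ, hx₀⟩
    obtain ⟨v, rfl⟩ := hxΓ
    rw [gval] at hx₀ ⊢
    have hv0 : (v : E) ∈ L₀ ⊓ L₁ := by
      constructor
      · have : (v : E) = ((v : E) + (f v : E)) - (f v : E) := (add_sub_cancel_right _ _).symm
        rw [this]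
        exact sub_mem hx₀ (f v).2
      · exact v.2
    rw [hmeet, Submodule.mem_bot] at hv0
    have : v = 0 := Subtype.ext hv0
    simp [this]
  constructor
  · -- InjOn
    intro f _ g _ h
    ext v
    have h' : LinearMap.range (L₁.subtype + L₀.subtype ∘ₗ f) =
        LinearMap.range (L₁.subtype + L₀.subtype ∘ₗ g) := h
    have hmem : (L₁.subtype + L₀.subtype ∘ₗ f) v ∈
        LinearMap.range (L₁.subtype + L₀.subtype ∘ₗ g) := by
      rw [← h']; exact LinearMap.mem_range_self _ v
    obtain ⟨w, hw⟩ := hmem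
    rw [gval, gval] at hw
    have hsub : ((w : E) - (v : E)) ∈ L₀ ⊓ L₁ := by
      constructor
      · have : (w : E) - (v : E) = (f v : E) - (g w : E) := by
          linear_combination (norm := module) hw
        rw [this]
        exact sub_mem (f v).2 (g w).2
      · exact sub_mem w.2 v.2
    rw [hmeet, Submodule.mem_bot, sub_eq_zero] at hsub
    have hwv : w = v := Subtype.ext hsub
    subst hwv
    have : (g w : E) = (f w : E) := by linear_combination (norm := module) hw
    exact congrArg Subtype.val (Subtype.ext this).symm
  · -- SurjOn
    rintro L ⟨hLlag, hLmeet⟩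
    have hdimL : Module.finrank K L + Module.finrank K L = Module.finrank K E :=
      lagrangian_finrank ω hnd hrefl L hLlag
    -- L and L₀ are complementary
    have hcompl : IsCompl L L₀ := by
      constructor
      · rw [disjoint_iff]; exact hLmeet
      · rw [codisjoint_iff]
        apply Submodule.eq_top_of_finrank_eq
        have := Submodule.finrank_sup_add_finrank_inf_eq L L₀
        rw [hLmeet, finrank_bot] at this
        omega
    -- the projection onto L₀ with kernel L
    set π := L₀.projectionOnto L hcompl.symm with hπ
    set f : L₁ →ₗ[K] L₀ := -(π ∘ₗ L₁.subtype) with hfdef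
    have hfval : ∀ v : L₁, (f v : E) = -(π (v : E) : E) := by
      intro v; simp [hfdef]
    -- graph of f lands in L
    have hgraph_le : LinearMap.range (L₁.subtype + L₀.subtype ∘ₗ f) ≤ L := by
      rintro x ⟨v, rfl⟩
      rw [gval, hfval]
      have := Submodule.projection_add_projection_eq_self hcompl (v : E)
      rw [Submodule.projection_apply, Submodule.projection_apply] at this
      have hrw : (v : E) + -(π (v : E) : E) =
          ((L.projectionOnto L₀ hcompl) (v : E) : E) := by
        linear_combination (norm := module) this.symm
      rw [hrw]
      exact ((L.projectionOnto L₀ hcompl) (v : E)).2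
    have hgraph : LinearMap.range (L₁.subtype + L₀.subtype ∘ₗ f) = L := by
      apply Submodule.eq_of_le_of_finrank_le hgraph_le
      rw [gfin f]
      omega
    refine ⟨f, ?_, hgraph⟩
    -- f is symmetric
    intro v w
    have hv : (v : E) + (f v : E) ∈ L := hgraph_le ⟨v, (gval f v)⟩
    have hw : (w : E) + (f w : E) ∈ L := hgraph_le ⟨w, (gval f w)⟩
    have h0 : ω ((v : E) + (f v : E)) ((w : E) + (f w : E)) = 0 := by
      rw [hLlag] at hv
      exact hv _ hw
    simp only [map_add, LinearMap.add_apply] at h0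
    rw [mem₁ v w, mem₀ (f v) (f w)] at h0
    have h1 : ω (v : E) (f w : E) = - ω (f w : E) (v : E) := by rw [halt.neg_eq]
    rw [h1] at h0
    linear_combination h0
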